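/- Let G be a group, A a G-graded ring, and B the smash product ring with idempotents {e_x}. For the rational pairing 𝒯 = (AG, B, ⟨-,-⟩), the trace ideal Rat^𝒯(B) equals ⊕_{x∈G} e_x Ã, and for every right B-module M one has Rat^𝒯(M) = M · Rat^𝒯(B) = ⊕_{x∈G} M e_x. -/

import Mathlib

set_option synthInstance.maxHeartbeats 1000000
open MulOpposite

variable {G : Type*} [Group G] [DecidableEq G] {A : Type*} [Ring A]


/-- Right action of `a ∈ A` on the basis element `y` of `𝒞 = AG ≅ G →₀ A`. -/
noncomputable def ractSingle (𝒜 : G → AddSubgroup A) [DirectSum.Decomposition 𝒜]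
    (y : G) (a : A) : G →₀ A :=
  DirectSum.toAddMonoid
    (fun z => (Finsupp.singleAddHom (y * z)).comp (𝒜 z).subtype)
    (DirectSum.decompose 𝒜 a)

/-- The left `A`-linear endomorphism `ã : c ↦ c·a` of `𝒞 = AG` (right
multiplication by `a`). -/
noncomputable def rmulHom (𝒜 : G → AddSubgroup A) [DirectSum.Decomposition 𝒜]
    (a : A) : (G →₀ A) →ₗ[A] (G →₀ A) :=
  Finsupp.lsum ℕ fun y => LinearMap.toSpanSingleton A _ (ractSingle 𝒜 y a)

/-- The projection `e_x` of `𝒞 = AG` onto the direct summand `Ax`. -/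
noncomputable def projHom (A : Type*) [Ring A] (x : G) : (G →₀ A) →ₗ[A] (G →₀ A) :=
  Finsupp.lsingle x ∘ₗ Finsupp.lapply x

/-- `ã` as an element of the opposite of the endomorphism ring of `𝒞` (the
left-colinear endomorphism ring has multiplication opposite to composition). -/
noncomputable def atilde (𝒜 : G → AddSubgroup A) [DirectSum.Decomposition 𝒜]
    (a : A) : (Module.End A (G →₀ A))ᵐᵒᵖ :=
  op (rmulHom 𝒜 a)

/-- `e_x` as an element of the opposite of the endomorphism ring of `𝒞`. -/
noncomputable def eIdem (A : Type*) [Ring A] (x : G) : (Module.End A (G →₀ A))ᵐᵒᵖ :=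
  op (projHom A x)

/-- The smash product ring `B`: the subring of the (left-colinear) endomorphism
ring of `𝒞 = AG` generated by `Ã` and the orthogonal idempotents `{e_x}`. -/
noncomputable def smashB (𝒜 : G → AddSubgroup A) [DirectSum.Decomposition 𝒜] :
    Subring (Module.End A (G →₀ A))ᵐᵒᵖ :=
  Subring.closure (Set.range (atilde 𝒜) ∪ Set.range (eIdem A (G := G)))

/-- The bilinear form `⟨-,-⟩ : 𝒞 × B → A`, `⟨c, f⟩ = ε(f(c))`. -/
noncomputable def cbPairing (c : G →₀ A) (b : (Module.End A (G →₀ A))ᵐᵒᵖ) : A :=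
  ((unop b) c).sum fun _ v => v

/-- `ã` as an element of the smash product ring `B = smashB 𝒜`. -/
noncomputable def atildeB (𝒜 : G → AddSubgroup A) [DirectSum.Decomposition 𝒜]
    (a : A) : smashB 𝒜 :=
  ⟨atilde 𝒜 a, Subring.subset_closure (Set.mem_union_left _ ⟨a, rfl⟩)⟩

/-- `e_x` as an element of the smash product ring `B = smashB 𝒜`. -/
noncomputable def eIdemB (𝒜 : G → AddSubgroup A) [DirectSum.Decomposition 𝒜]
    (x : G) : smashB 𝒜 :=
  ⟨eIdem A x, Subring.subset_closure (Set.mem_union_right _ ⟨x, rfl⟩)⟩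

/-- The set of rational elements of a right `B`-module `M`, for the rational
pairing `𝒯 = (AG, B, ⟨-,-⟩)`: `m` is rational if there are finitely many
`(c_i, m_i) ∈ 𝒞 × M` with `m·b = Σ_i m_i ⟨c_i, b⟩` for all `b ∈ B`. -/
noncomputable def ratSet (𝒜 : G → AddSubgroup A) [DirectSum.Decomposition 𝒜]
    (M : Type*) [AddCommGroup M] [Module (smashB 𝒜)ᵐᵒᵖ M] : Set M :=
  {m | ∃ (n : ℕ) (c : Fin n → (G →₀ A)) (v : Fin n → M), ∀ b : smashB 𝒜,
    op b • m = ∑ i, op (atildeB 𝒜 (cbPairing (c i) (b : (Module.End A (G →₀ A))ᵐᵒᵖ))) • v i}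

/-!
Every `b ∈ B` preserves each right `A`-submodule `x·A` of `AG` (as the generators `ã` and `e_y`
do), so `b` sends the group-like `x` to `x·⟨x, b⟩`; this is the identity `e_x b = e_x ã` with
`a = ⟨x, b⟩`. Hence `m e_x` is rational for every `m`, with the single witness `(x, m e_x)`.
Conversely, if `m b = Σ mᵢ ⟨cᵢ, b⟩`, pairing with `b = e_x` and `b = 1` shows that `m e_x`
vanishes off the supports of the `cᵢ` and that `m = Σ_x m e_x`. For `M = B` this puts `Rat(B)`
inside `Σ_x B e_x ⊆ ⊕_x e_x Ã`, the latter being a left ideal by the commutation rule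
`ã e_x = e_{x z⁻¹} ã` for `a ∈ A_z`; the reverse inclusion holds because `Rat(B)` is a
submodule containing the `e_x`. Directness comes from the orthogonality of the `e_x`.
-/

section

variable (𝒜 : G → AddSubgroup A) [DirectSum.Decomposition 𝒜]

/- Instance search does not find `DistribMulAction (smashB 𝒜)ᵐᵒᵖ M` through the generic
`SubringClass.toRing`; this named copy of the same instance lets it succeed. -/
noncomputable local instance : Ring (smashB 𝒜) := SubringClass.toRing (smashB 𝒜)

noncomputable def counit : (G →₀ A) →+ A :=
  Finsupp.liftAddHom fun _ => AddMonoidHom.id A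

omit [Group G] [DecidableEq G] in
lemma counit_single (x : G) (a : A) : counit (Finsupp.single x a) = a := by
  simp [counit]

omit [Group G] [DecidableEq G] in
lemma cbPairing_eq_counit (c : G →₀ A) (b : (Module.End A (G →₀ A))ᵐᵒᵖ) :
    cbPairing c b = counit (unop b c) := rfl

noncomputable def ractSingleHom (y : G) : A →+ (G →₀ A) :=
  (DirectSum.toAddMonoid fun z => (Finsupp.singleAddHom (y * z)).comp (𝒜 z).subtype).comp
    (DirectSum.decomposeAddEquiv 𝒜).toAddMonoidHom

lemma ractSingleHom_apply (y : G) (a : A) : ractSingleHom 𝒜 y a = ractSingle 𝒜 y a := rfl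

lemma ractSingle_of_mem {z : G} {a : A} (ha : a ∈ 𝒜 z) (y : G) :
    ractSingle 𝒜 y a = Finsupp.single (y * z) a := by
  rw [ractSingle, show a = ((⟨a, ha⟩ : 𝒜 z) : A) from rfl, DirectSum.decompose_coe,
    DirectSum.toAddMonoid_of]
  rfl

lemma counit_ractSingle (y : G) (a : A) : counit (ractSingle 𝒜 y a) = a := by
  rw [← ractSingleHom_apply]
  induction a using DirectSum.Decomposition.inductionOn 𝒜 with
  | zero => rw [map_zero, map_zero]
  | homogeneous a => rw [ractSingleHom_apply, ractSingle_of_mem 𝒜 a.2, counit_single]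
  | add a a' ha ha' => rw [map_add, map_add, ha, ha']

lemma ractSingle_mul_of_mem
    (hmul : ∀ {x y : G} {a b : A}, a ∈ 𝒜 x → b ∈ 𝒜 y → a * b ∈ 𝒜 (x * y))
    {z : G} {h : A} (hh : h ∈ 𝒜 z) (y : G) (a : A) :
    ractSingle 𝒜 y (h * a) = h • ractSingle 𝒜 (y * z) a := by
  simp only [← ractSingleHom_apply]
  induction a using DirectSum.Decomposition.inductionOn 𝒜 with
  | zero => simp
  | homogeneous a =>
      rw [ractSingleHom_apply, ractSingleHom_apply, ractSingle_of_mem 𝒜 (hmul hh a.2),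
        ractSingle_of_mem 𝒜 a.2, Finsupp.smul_single, smul_eq_mul, mul_assoc]
  | add a a' ha ha' => rw [mul_add, map_add, map_add, ha, ha', smul_add]

lemma rmulHom_single (a : A) (y : G) (s : A) :
    rmulHom 𝒜 a (Finsupp.single y s) = s • ractSingle 𝒜 y a := by
  rw [rmulHom, Finsupp.lsum_single]
  rfl

lemma rmulHom_ractSingle
    (hmul : ∀ {x y : G} {a b : A}, a ∈ 𝒜 x → b ∈ 𝒜 y → a * b ∈ 𝒜 (x * y))
    (a c : A) (y : G) :
    rmulHom 𝒜 a (ractSingle 𝒜 y c) = ractSingle 𝒜 y (c * a) := by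
  simp only [← ractSingleHom_apply]
  induction c using DirectSum.Decomposition.inductionOn 𝒜 with
  | zero => simp
  | homogeneous c =>
      rw [ractSingleHom_apply, ractSingleHom_apply, ractSingle_of_mem 𝒜 c.2, rmulHom_single,
        ractSingle_mul_of_mem 𝒜 hmul c.2]
  | add c c' hc hc' => rw [map_add, map_add, hc, hc', add_mul, map_add]

omit [Group G] [DecidableEq G] in
lemma projHom_apply (x : G) (c : G →₀ A) : projHom A x c = Finsupp.single x (c x) := rfl

omit [Group G] in
lemma projHom_single (x y : G) (s : A) :
    projHom A x (Finsupp.single y s) = if y = x then Finsupp.single x s else 0 := by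
  by_cases h : y = x <;> simp [projHom_apply, h]

/-- The right `A`-submodule `x·A` of `AG`. -/
noncomputable def ractRange (x : G) : AddSubgroup (G →₀ A) := (ractSingleHom 𝒜 x).range

lemma eq_ractSingle_counit_of_mem_ractRange {x : G} {c : G →₀ A} (hc : c ∈ ractRange 𝒜 x) :
    c = ractSingle 𝒜 x (counit c) := by
  obtain ⟨a, rfl⟩ := hc
  rw [ractSingleHom_apply, counit_ractSingle]

noncomputable def ractRangeStabilizer : Subring (Module.End A (G →₀ A))ᵐᵒᵖ where
  carrier := {β | ∀ x, ∀ c ∈ ractRange 𝒜 x, unop β c ∈ ractRange 𝒜 x}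
  mul_mem' hβ hγ x c hc := hγ x _ (hβ x c hc)
  one_mem' _ _ hc := hc
  add_mem' hβ hγ x c hc := add_mem (hβ x c hc) (hγ x c hc)
  zero_mem' x _ _ := zero_mem (ractRange 𝒜 x)
  neg_mem' hβ x c hc := neg_mem (hβ x c hc)

lemma rmulHom_mem_ractRange
    (hmul : ∀ {x y : G} {a b : A}, a ∈ 𝒜 x → b ∈ 𝒜 y → a * b ∈ 𝒜 (x * y))
    (a : A) {x : G} {c : G →₀ A} (hc : c ∈ ractRange 𝒜 x) : rmulHom 𝒜 a c ∈ ractRange 𝒜 x := by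
  obtain ⟨c, rfl⟩ := hc
  exact ⟨c * a, by rw [ractSingleHom_apply, ractSingleHom_apply, rmulHom_ractSingle 𝒜 hmul]⟩

lemma projHom_mem_ractRange (y : G) {x : G} {c : G →₀ A} (hc : c ∈ ractRange 𝒜 x) :
    projHom A y c ∈ ractRange 𝒜 x := by
  obtain ⟨c, rfl⟩ := hc
  induction c using DirectSum.Decomposition.inductionOn 𝒜 with
  | zero => simp
  | homogeneous c =>
      rw [ractSingleHom_apply, ractSingle_of_mem 𝒜 c.2, projHom_single]
      split_ifs with h
      · exact ⟨c, by rw [ractSingleHom_apply, ractSingle_of_mem 𝒜 c.2, h]⟩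
      · exact zero_mem _
  | add c c' hc hc' => rw [map_add, map_add]; exact add_mem hc hc'

lemma smashB_le_ractRangeStabilizer
    (hmul : ∀ {x y : G} {a b : A}, a ∈ 𝒜 x → b ∈ 𝒜 y → a * b ∈ 𝒜 (x * y)) :
    smashB 𝒜 ≤ ractRangeStabilizer 𝒜 := by
  refine Subring.closure_le.mpr (Set.union_subset ?_ ?_)
  · rintro _ ⟨a, rfl⟩ x c hc
    exact rmulHom_mem_ractRange 𝒜 hmul a hc
  · rintro _ ⟨y, rfl⟩ x c hc
    exact projHom_mem_ractRange 𝒜 y hc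

lemma smashB_apply_single (hone : (1 : A) ∈ 𝒜 1)
    (hmul : ∀ {x y : G} {a b : A}, a ∈ 𝒜 x → b ∈ 𝒜 y → a * b ∈ 𝒜 (x * y))
    (b : smashB 𝒜) (x : G) :
    unop (b : (Module.End A (G →₀ A))ᵐᵒᵖ) (Finsupp.single x 1) =
      ractSingle 𝒜 x (cbPairing (Finsupp.single x 1) b) := by
  have hx : Finsupp.single x (1 : A) ∈ ractRange 𝒜 x :=
    ⟨1, by rw [ractSingleHom_apply, ractSingle_of_mem 𝒜 hone, mul_one]⟩
  rw [cbPairing_eq_counit]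
  exact eq_ractSingle_counit_of_mem_ractRange 𝒜
    (smashB_le_ractRangeStabilizer 𝒜 hmul b.2 x _ hx)

lemma smashB_ext {b b' : smashB 𝒜}
    (h : ∀ y, unop (b : (Module.End A (G →₀ A))ᵐᵒᵖ) (Finsupp.single y 1) =
      unop (b' : (Module.End A (G →₀ A))ᵐᵒᵖ) (Finsupp.single y 1)) : b = b' :=
  Subtype.ext <| unop_injective <| Finsupp.lhom_ext' fun y => LinearMap.ext_ring (h y)

lemma unop_smashB_mul_apply (b b' : smashB 𝒜) (c : G →₀ A) :
    unop ((b * b' : smashB 𝒜) : (Module.End A (G →₀ A))ᵐᵒᵖ) c =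
      unop (b' : (Module.End A (G →₀ A))ᵐᵒᵖ) (unop (b : (Module.End A (G →₀ A))ᵐᵒᵖ) c) := rfl

lemma unop_atildeB_single (a : A) (y : G) :
    unop (atildeB 𝒜 a : (Module.End A (G →₀ A))ᵐᵒᵖ) (Finsupp.single y 1) =
      ractSingle 𝒜 y a := by
  rw [← one_smul A (ractSingle 𝒜 y a), ← rmulHom_single]
  rfl

lemma unop_eIdemB_single (x y : G) (s : A) :
    unop (eIdemB 𝒜 x : (Module.End A (G →₀ A))ᵐᵒᵖ) (Finsupp.single y s) =
      if y = x then Finsupp.single x s else 0 :=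
  projHom_single x y s

lemma atildeB_add (a a' : A) : atildeB 𝒜 (a + a') = atildeB 𝒜 a + atildeB 𝒜 a' :=
  smashB_ext 𝒜 fun y => by
    simp only [unop_atildeB_single, Subring.coe_add, unop_add, LinearMap.add_apply,
      ← ractSingleHom_apply, map_add]

noncomputable def atildeAddHom : A →+ smashB 𝒜 :=
  AddMonoidHom.mk' (atildeB 𝒜) (atildeB_add 𝒜)

lemma atildeAddHom_apply (a : A) : atildeAddHom 𝒜 a = atildeB 𝒜 a := rfl

lemma atildeB_zero : atildeB 𝒜 0 = 0 := (atildeAddHom 𝒜).map_zero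

lemma atildeB_one (hone : (1 : A) ∈ 𝒜 1) : atildeB 𝒜 1 = 1 :=
  smashB_ext 𝒜 fun y => by
    rw [unop_atildeB_single, ractSingle_of_mem 𝒜 hone, mul_one]
    rfl

lemma atildeB_mul (hmul : ∀ {x y : G} {a b : A}, a ∈ 𝒜 x → b ∈ 𝒜 y → a * b ∈ 𝒜 (x * y))
    (a a' : A) : atildeB 𝒜 a * atildeB 𝒜 a' = atildeB 𝒜 (a * a') :=
  smashB_ext 𝒜 fun y => by
    rw [unop_smashB_mul_apply, unop_atildeB_single, unop_atildeB_single]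
    exact rmulHom_ractSingle 𝒜 hmul a' a y

lemma eIdemB_mul_eIdemB (x y : G) :
    eIdemB 𝒜 x * eIdemB 𝒜 y = if x = y then eIdemB 𝒜 y else 0 :=
  smashB_ext 𝒜 fun w => by
    rw [unop_smashB_mul_apply, unop_eIdemB_single]
    split_ifs with hwx hxy <;> subst_vars <;> simp [unop_eIdemB_single, *]

lemma atildeB_mul_eIdemB_of_mem {z : G} {a : A} (ha : a ∈ 𝒜 z) (x : G) :
    atildeB 𝒜 a * eIdemB 𝒜 x = eIdemB 𝒜 (x * z⁻¹) * atildeB 𝒜 a :=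
  smashB_ext 𝒜 fun y => by
    rw [unop_smashB_mul_apply, unop_smashB_mul_apply, unop_atildeB_single,
      ractSingle_of_mem 𝒜 ha, unop_eIdemB_single, unop_eIdemB_single]
    have hyx : y * z = x ↔ y = x * z⁻¹ := eq_mul_inv_iff_mul_eq.symm
    split_ifs with h₁ h₂ h₂
    · rw [unop_atildeB_single, ractSingle_of_mem 𝒜 ha, inv_mul_cancel_right]
    · exact absurd (hyx.mp h₁) h₂
    · exact absurd (hyx.mpr h₂) h₁
    · rw [map_zero]

lemma eIdemB_mul_eq (hone : (1 : A) ∈ 𝒜 1)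
    (hmul : ∀ {x y : G} {a b : A}, a ∈ 𝒜 x → b ∈ 𝒜 y → a * b ∈ 𝒜 (x * y))
    (x : G) (b : smashB 𝒜) :
    eIdemB 𝒜 x * b = eIdemB 𝒜 x * atildeB 𝒜 (cbPairing (Finsupp.single x 1) b) :=
  smashB_ext 𝒜 fun y => by
    rw [unop_smashB_mul_apply, unop_smashB_mul_apply, unop_eIdemB_single]
    split_ifs with h
    · rw [smashB_apply_single 𝒜 hone hmul, unop_atildeB_single]
    · simp

omit [Group G] [DecidableEq G] in
lemma cbPairing_mul (c : G →₀ A) (b b' : (Module.End A (G →₀ A))ᵐᵒᵖ) :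
    cbPairing c (b * b') = cbPairing (unop b c) b' := rfl

omit [Group G] [DecidableEq G] in
lemma cbPairing_eIdem (c : G →₀ A) (x : G) : cbPairing c (eIdem A x) = c x := by
  rw [cbPairing_eq_counit, eIdem, unop_op, projHom_apply, counit_single]

omit [Group G] [DecidableEq G] in
lemma cbPairing_one (c : G →₀ A) :
    cbPairing c (1 : (Module.End A (G →₀ A))ᵐᵒᵖ) = counit c := cbPairing_eq_counit c 1

variable (M : Type*) [AddCommGroup M] [Module (smashB 𝒜)ᵐᵒᵖ M]

/-- `Rat^𝒯(M)`; closed under the action because `⟨c, b' b⟩ = ⟨b' c, b⟩`. -/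
noncomputable def ratSubmodule : Submodule (smashB 𝒜)ᵐᵒᵖ M where
  carrier := ratSet 𝒜 M
  zero_mem' := ⟨0, Fin.elim0, Fin.elim0, fun b => by simp⟩
  add_mem' := by
    rintro m m' ⟨n, c, v, h⟩ ⟨n', c', v', h'⟩
    refine ⟨n + n', Fin.append c c', Fin.append v v', fun b => ?_⟩
    rw [smul_add, h b, h' b, Fin.sum_univ_add]
    simp
  smul_mem' := by
    rintro b' m ⟨n, c, v, h⟩
    refine ⟨n, fun i => unop (b'.unop : (Module.End A (G →₀ A))ᵐᵒᵖ) (c i), v, fun b => ?_⟩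
    rw [smul_smul, ← op_unop b', ← op_mul, h]
    simp only [Subring.coe_mul, cbPairing_mul, unop_op]

lemma mem_ratSet_of_smul_eq {m : M} (c : G →₀ A) (v : M)
    (h : ∀ b : smashB 𝒜, op b • m = op (atildeB 𝒜 (cbPairing c b)) • v) :
    m ∈ ratSet 𝒜 M :=
  ⟨1, fun _ => c, fun _ => v, fun b => by simp [h b]⟩

lemma eIdemB_smul_mem_ratSet (hone : (1 : A) ∈ 𝒜 1)
    (hmul : ∀ {x y : G} {a b : A}, a ∈ 𝒜 x → b ∈ 𝒜 y → a * b ∈ 𝒜 (x * y))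
    (x : G) (m : M) : op (eIdemB 𝒜 x) • m ∈ ratSet 𝒜 M :=
  mem_ratSet_of_smul_eq 𝒜 M (Finsupp.single x 1) (op (eIdemB 𝒜 x) • m) fun b => by
    rw [smul_smul, smul_smul, ← op_mul, ← op_mul, eIdemB_mul_eq 𝒜 hone hmul]

lemma eIdemB_smul_finsupp_sum (g : G →₀ M) (x : G) :
    op (eIdemB 𝒜 x) • (g.sum fun y my => op (eIdemB 𝒜 y) • my) = op (eIdemB 𝒜 x) • g x := by
  simp only [Finsupp.sum, Finset.smul_sum, smul_smul, ← op_mul, eIdemB_mul_eIdemB, apply_ite op,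
    op_zero, ite_smul, zero_smul, Finset.sum_ite_eq']
  split_ifs with h
  · rfl
  · rw [Finsupp.notMem_support_iff.mp h, smul_zero]

lemma eIdemB_smul_eIdemB_smul (x : G) (m : M) :
    op (eIdemB 𝒜 x) • op (eIdemB 𝒜 x) • m = op (eIdemB 𝒜 x) • m := by
  rw [smul_smul, ← op_mul, eIdemB_mul_eIdemB, if_pos rfl]

lemma op_atildeB_sum_smul {ι : Type*} (s : Finset ι) (a : ι → A) (v : M) :
    op (atildeB 𝒜 (∑ i ∈ s, a i)) • v = ∑ i ∈ s, op (atildeB 𝒜 (a i)) • v := by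
  simp only [← atildeAddHom_apply, map_sum, Finset.op_sum, Finset.sum_smul]

omit [Group G] [DecidableEq G] in
lemma counit_eq_sum_of_support_subset {c : G →₀ A} {S : Finset G} (hS : c.support ⊆ S) :
    counit c = ∑ x ∈ S, c x := by
  rw [counit, Finsupp.liftAddHom_apply, Finsupp.sum_of_support_subset c hS _ fun _ _ => rfl]
  rfl

lemma exists_finsupp_of_mem_ratSet {m : M} (hm : m ∈ ratSet 𝒜 M) :
    ∃ g : G →₀ M, m = g.sum fun x mx => op (eIdemB 𝒜 x) • mx := by
  classical
  obtain ⟨n, c, v, h⟩ := hm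
  set S := Finset.univ.biUnion fun i => (c i).support
  have hsupp : ∀ i, (c i).support ⊆ S := fun i =>
    Finset.subset_biUnion_of_mem (fun i => (c i).support) (Finset.mem_univ i)
  have hcomp : ∀ x, op (eIdemB 𝒜 x) • m = ∑ i, op (atildeB 𝒜 (c i x)) • v i := fun x => by
    simp only [h, eIdemB, cbPairing_eIdem]
  have hoff : ∀ x ∉ S, op (eIdemB 𝒜 x) • m = 0 := fun x hx => by
    rw [hcomp]
    refine Finset.sum_eq_zero fun i _ => ?_
    rw [Finsupp.notMem_support_iff.mp fun hi => hx (hsupp i hi), atildeB_zero, op_zero, zero_smul]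
  refine ⟨Finsupp.onFinset S _ fun x hx => not_imp_comm.mp (hoff x) hx, ?_⟩
  rw [Finsupp.onFinset_sum _ fun _ => smul_zero _]
  simp only [eIdemB_smul_eIdemB_smul]
  simp only [hcomp]
  rw [Finset.sum_comm]
  conv_lhs => rw [← one_smul (smashB 𝒜)ᵐᵒᵖ m, ← op_one, h]
  refine Finset.sum_congr rfl fun i _ => ?_
  rw [← op_atildeB_sum_smul, ← counit_eq_sum_of_support_subset (hsupp i), ← cbPairing_one]
  rfl

noncomputable def eAtildeSum : (G →₀ A) →+ smashB 𝒜 :=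
  Finsupp.liftAddHom fun x => (AddMonoidHom.mulLeft (eIdemB 𝒜 x)).comp (atildeAddHom 𝒜)

lemma eAtildeSum_apply (f : G →₀ A) :
    eAtildeSum 𝒜 f = f.sum fun x a => eIdemB 𝒜 x * atildeB 𝒜 a :=
  Finsupp.liftAddHom_apply _ f

lemma eIdemB_mul_atildeB_mem_range (x : G) (a : A) :
    eIdemB 𝒜 x * atildeB 𝒜 a ∈ (eAtildeSum 𝒜).range :=
  ⟨Finsupp.single x a, by
    rw [eAtildeSum_apply, Finsupp.sum_single_index (by rw [atildeB_zero, mul_zero])]⟩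

lemma eIdemB_mem_range (hone : (1 : A) ∈ 𝒜 1) (x : G) : eIdemB 𝒜 x ∈ (eAtildeSum 𝒜).range := by
  simpa [atildeB_one 𝒜 hone] using eIdemB_mul_atildeB_mem_range 𝒜 x 1

lemma mul_mem_range_of_forall {b : smashB 𝒜}
    (hb : ∀ x a, b * (eIdemB 𝒜 x * atildeB 𝒜 a) ∈ (eAtildeSum 𝒜).range)
    {t : smashB 𝒜} (ht : t ∈ (eAtildeSum 𝒜).range) : b * t ∈ (eAtildeSum 𝒜).range := by
  obtain ⟨f, rfl⟩ := ht
  rw [eAtildeSum_apply, Finsupp.sum, Finset.mul_sum]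
  exact sum_mem fun x _ => hb x (f x)

lemma atildeB_mul_mem_range
    (hmul : ∀ {x y : G} {a b : A}, a ∈ 𝒜 x → b ∈ 𝒜 y → a * b ∈ 𝒜 (x * y))
    (a : A) (x : G) (c : A) :
    atildeB 𝒜 a * (eIdemB 𝒜 x * atildeB 𝒜 c) ∈ (eAtildeSum 𝒜).range := by
  induction a using DirectSum.Decomposition.inductionOn 𝒜 with
  | zero =>
      rw [atildeB_zero, zero_mul]
      exact zero_mem _
  | homogeneous a =>
      rw [← mul_assoc, atildeB_mul_eIdemB_of_mem 𝒜 a.2, mul_assoc, atildeB_mul 𝒜 hmul]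
      exact eIdemB_mul_atildeB_mem_range 𝒜 _ _
  | add a a' ha ha' => rw [atildeB_add, add_mul]; exact add_mem ha ha'

lemma eIdemB_mul_mem_range (y x : G) (c : A) :
    eIdemB 𝒜 y * (eIdemB 𝒜 x * atildeB 𝒜 c) ∈ (eAtildeSum 𝒜).range := by
  rw [← mul_assoc, eIdemB_mul_eIdemB]
  split_ifs
  · exact eIdemB_mul_atildeB_mem_range 𝒜 x c
  · rw [zero_mul]
    exact zero_mem _

lemma mul_mem_range
    (hmul : ∀ {x y : G} {a b : A}, a ∈ 𝒜 x → b ∈ 𝒜 y → a * b ∈ 𝒜 (x * y))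
    (b : smashB 𝒜) {t : smashB 𝒜} (ht : t ∈ (eAtildeSum 𝒜).range) :
    b * t ∈ (eAtildeSum 𝒜).range := by
  obtain ⟨β, hβ⟩ := b
  induction hβ using Subring.closure_induction generalizing t with
  | mem β hgen =>
      refine mul_mem_range_of_forall 𝒜 (fun x c => ?_) ht
      rcases hgen with ⟨a, rfl⟩ | ⟨y, rfl⟩
      · exact atildeB_mul_mem_range 𝒜 hmul a x c
      · exact eIdemB_mul_mem_range 𝒜 y x c
  | zero =>
      change (0 : smashB 𝒜) * t ∈ _
      rw [zero_mul]
      exact zero_mem _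
  | one =>
      change (1 : smashB 𝒜) * t ∈ _
      rwa [one_mul]
  | add β β' hβ hβ' ih ih' =>
      change ((⟨β, hβ⟩ + ⟨β', hβ'⟩ : smashB 𝒜)) * t ∈ _
      rw [add_mul]
      exact add_mem (ih ht) (ih' ht)
  | neg β hβ ih =>
      change (-⟨β, hβ⟩ : smashB 𝒜) * t ∈ _
      rw [neg_mul]
      exact neg_mem (ih ht)
  | mul β β' hβ hβ' ih ih' =>
      change ((⟨β, hβ⟩ * ⟨β', hβ'⟩ : smashB 𝒜)) * t ∈ _
      rw [mul_assoc]
      exact ih (ih' ht)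

lemma ratSet_smashB_eq_range (hone : (1 : A) ∈ 𝒜 1)
    (hmul : ∀ {x y : G} {a b : A}, a ∈ 𝒜 x → b ∈ 𝒜 y → a * b ∈ 𝒜 (x * y)) :
    ratSet 𝒜 (smashB 𝒜) = (eAtildeSum 𝒜).range := by
  ext b
  constructor
  · intro hb
    obtain ⟨g, rfl⟩ := exists_finsupp_of_mem_ratSet 𝒜 (smashB 𝒜) hb
    refine AddSubgroup.sum_mem _ fun x _ => ?_
    exact mul_mem_range 𝒜 hmul (g x) (eIdemB_mem_range 𝒜 hone x)
  · rintro ⟨f, rfl⟩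
    rw [eAtildeSum_apply]
    refine AddSubmonoid.sum_mem (ratSubmodule 𝒜 (smashB 𝒜)).toAddSubmonoid fun x _ => ?_
    have he : eIdemB 𝒜 x ∈ ratSet 𝒜 (smashB 𝒜) := by
      simpa using eIdemB_smul_mem_ratSet 𝒜 (smashB 𝒜) hone hmul x 1
    simpa using (ratSubmodule 𝒜 (smashB 𝒜)).smul_mem (op (atildeB 𝒜 (f x))) he

lemma ratSet_eq_setOf_finsupp_sum (hone : (1 : A) ∈ 𝒜 1)
    (hmul : ∀ {x y : G} {a b : A}, a ∈ 𝒜 x → b ∈ 𝒜 y → a * b ∈ 𝒜 (x * y)) :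
    ratSet 𝒜 M = {m : M | ∃ g : G →₀ M, m = g.sum fun x mx => op (eIdemB 𝒜 x) • mx} := by
  ext m
  refine ⟨exists_finsupp_of_mem_ratSet 𝒜 M, ?_⟩
  rintro ⟨g, rfl⟩
  exact AddSubmonoid.sum_mem (ratSubmodule 𝒜 M).toAddSubmonoid fun x _ =>
    eIdemB_smul_mem_ratSet 𝒜 M hone hmul x (g x)

end

/-- Let `G` be a group, `A` a `G`-graded ring, and `B` the smash product ring
with idempotents `{e_x}`.  For the rational pairing `𝒯 = (AG, B, ⟨-,-⟩)`, the
trace ideal `Rat^𝒯(B)` equals `⊕_{x∈G} e_x Ã`, and for every right `B`-module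
`M` one has `Rat^𝒯(M) = M·Rat^𝒯(B) = ⊕_{x∈G} M e_x` (the sum of the `M e_x`
being direct). -/
theorem stmt15 (𝒜 : G → AddSubgroup A) [DirectSum.Decomposition 𝒜]
    (hone : (1 : A) ∈ 𝒜 1)
    (hmul : ∀ {x y : G} {a b : A}, a ∈ 𝒜 x → b ∈ 𝒜 y → a * b ∈ 𝒜 (x * y))
    (M : Type*) [AddCommGroup M] [Module (smashB 𝒜)ᵐᵒᵖ M] :
    -- the trace ideal: `Rat^𝒯(B) = ⊕_x e_x Ã`
    (ratSet 𝒜 (smashB 𝒜) =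
      {b : smashB 𝒜 | ∃ f : G →₀ A,
        b = f.sum fun x ax => eIdemB 𝒜 x * atildeB 𝒜 ax}) ∧
    -- `Rat^𝒯(M) = M·Rat^𝒯(B) = ⊕_x M e_x` for every right `B`-module `M`
    (ratSet 𝒜 M =
      {m : M | ∃ g : G →₀ M, m = g.sum fun x mx => op (eIdemB 𝒜 x) • mx}) ∧
    -- the sum `Σ_x M e_x` is direct
    (∀ g : G →₀ M,
      (g.sum fun x mx => op (eIdemB 𝒜 x) • mx) = 0 →
      ∀ x : G, op (eIdemB 𝒜 x) • g x = 0) := by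
  refine ⟨?_, ratSet_eq_setOf_finsupp_sum 𝒜 M hone hmul, fun g hg x => ?_⟩
  · rw [ratSet_smashB_eq_range 𝒜 hone hmul]
    ext b
    simp only [AddMonoidHom.coe_range, Set.mem_range, eAtildeSum_apply, Set.mem_ofPred_eq, eq_comm]
  · rw [← eIdemB_smul_finsupp_sum 𝒜 M g x, hg, smul_zero]
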